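/- arXiv:2312.07683 — 2 statements merged into one kernel-verified Lean document; each statement's English description precedes it below -/
import Mathlib

section
/- Let U be distributed according to the Gaussian copula on [0,1]^d with invertible correlation matrix Σ, i.e., with Lebesgue density f_U(u) = (det Σ)^{-1/2} exp(−(1/2) z^⊤(Σ^{−1}−I_d)z) where z = (Φ^{−1}(u_1),…,Φ^{−1}(u_d)) and Φ is the standard normal CDF. Then for all sufficiently small t > 0, Leb({u : 0 < f_U(u) < t}) ≤ d · (t √(det Σ))^{1/(d λ_max(Σ^{−1}−I_d))}. -/
open MeasureTheory Matrix
open Set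



noncomputable def gcsd_g (x : ℝ) : ℝ := (Real.sqrt (2 * Real.pi))⁻¹ * Real.exp (-(x ^ 2) / 2)

lemma gcsd_g_pos (x : ℝ) : 0 < gcsd_g x := by
  unfold gcsd_g
  positivity

lemma gcsd_g_eq (x : ℝ) : gcsd_g x = (Real.sqrt (2 * Real.pi))⁻¹ * Real.exp (-(1/2) * x ^ 2) := by
  unfold gcsd_g; ring_nf

lemma gcsd_g_integrable : Integrable gcsd_g := by
  have h : Integrable (fun x : ℝ => Real.exp (-(1/2 : ℝ) * x ^ 2)) :=
    integrable_exp_neg_mul_sq (by norm_num)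
  have := h.const_mul ((Real.sqrt (2 * Real.pi))⁻¹)
  apply this.congr
  filter_upwards with x
  rw [gcsd_g_eq]

lemma gcsd_g_integral : ∫ x, gcsd_g x = 1 := by
  have h : ∫ x : ℝ, Real.exp (-(1/2 : ℝ) * x ^ 2) = Real.sqrt (Real.pi / (1/2)) :=
    integral_gaussian (1/2)
  have h2 : ∫ x, gcsd_g x = (Real.sqrt (2 * Real.pi))⁻¹ * ∫ x : ℝ, Real.exp (-(1/2 : ℝ) * x ^ 2) := by
    rw [← integral_const_mul]
    congr 1; ext x; rw [gcsd_g_eq]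
  rw [h2, h]
  have : Real.pi / (1/2) = 2 * Real.pi := by ring
  rw [this]
  have hpos : (0:ℝ) < Real.sqrt (2 * Real.pi) := Real.sqrt_pos.mpr (by positivity)
  field_simp

lemma gcsd_g_integral_Ioi_zero : ∫ x in Ioi (0:ℝ), gcsd_g x = 1/2 := by
  have h : ∫ x in Ioi (0:ℝ), Real.exp (-(1/2 : ℝ) * x ^ 2) = Real.sqrt (Real.pi / (1/2)) / 2 :=
    integral_gaussian_Ioi (1/2)
  have h2 : ∫ x in Ioi (0:ℝ), gcsd_g x
      = (Real.sqrt (2 * Real.pi))⁻¹ * ∫ x in Ioi (0:ℝ), Real.exp (-(1/2 : ℝ) * x ^ 2) := by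
    rw [← integral_const_mul]
    congr 1; ext x; rw [gcsd_g_eq]
  rw [h2, h]
  have : Real.pi / (1/2) = 2 * Real.pi := by ring
  rw [this]
  have hpos : (0:ℝ) < Real.sqrt (2 * Real.pi) := Real.sqrt_pos.mpr (by positivity)
  field_simp

lemma gcsd_strictMono : StrictMono (fun a => ∫ x in Iic a, gcsd_g x) := by
  intro a b hab
  simp only
  have hIa : IntegrableOn gcsd_g (Iic a) := gcsd_g_integrable.integrableOn
  have hIb : IntegrableOn gcsd_g (Iic b) := gcsd_g_integrable.integrableOn
  have h := intervalIntegral.integral_Iic_sub_Iic hIa hIb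
  have hpos : (0:ℝ) < ∫ x in a..b, gcsd_g x := by
    apply intervalIntegral.intervalIntegral_pos_of_pos_on
    · exact gcsd_g_integrable.intervalIntegrable
    · exact fun x _ => gcsd_g_pos x
    · exact hab
  linarith

lemma gcsd_Iic_add_Ioi (s : ℝ) :
    (∫ x in Iic s, gcsd_g x) + (∫ x in Ioi s, gcsd_g x) = 1 := by
  rw [intervalIntegral.integral_Iic_add_Ioi gcsd_g_integrable.integrableOn gcsd_g_integrable.integrableOn,
    gcsd_g_integral]

lemma gcsd_symm (s : ℝ) : (∫ x in Iic (-s), gcsd_g x) = ∫ x in Ioi s, gcsd_g x := by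
  have h := integral_comp_neg_Iic (-s) gcsd_g
  rw [neg_neg] at h
  rw [← h]
  congr 1; ext x; unfold gcsd_g; rw [neg_pow]; norm_num

lemma gcsd_shift (s : ℝ) :
    (∫ x in Ioi s, gcsd_g (x - s)) = ∫ x in Ioi (0:ℝ), gcsd_g x := by
  have hmp : MeasurePreserving (fun x : ℝ => x + s) volume volume :=
    measurePreserving_add_right volume s
  have hemb : MeasurableEmbedding (fun x : ℝ => x + s) :=
    (Homeomorph.addRight s).isClosedEmbedding.measurableEmbedding
  have h := hmp.setIntegral_preimage_emb hemb (fun y => gcsd_g (y - s)) (Ioi s)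
  have hpre : (fun x : ℝ => x + s) ⁻¹' (Ioi s) = Ioi 0 := by
    ext x; simp [lt_add_iff_pos_left]
  rw [hpre] at h
  rw [← h]
  congr 1; ext x; simp

lemma gcsd_tail (s : ℝ) (hs : 0 ≤ s) :
    (∫ x in Ioi s, gcsd_g x) ≤ Real.exp (-(s ^ 2) / 2) / 2 := by
  have hmono : ∀ x ∈ Ioi s, gcsd_g x ≤ Real.exp (-(s ^ 2) / 2) * gcsd_g (x - s) := by
    intro x hx
    unfold gcsd_g
    rw [mul_comm (Real.exp _), mul_assoc, ← Real.exp_add]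
    apply mul_le_mul_of_nonneg_left _ (by positivity)
    apply Real.exp_le_exp.mpr
    have hxs : s ≤ x := le_of_lt hx
    nlinarith [mul_nonneg hs (sub_nonneg.mpr hxs)]
  have hint1 : IntegrableOn gcsd_g (Ioi s) := gcsd_g_integrable.integrableOn
  have hint2 : IntegrableOn (fun x => Real.exp (-(s ^ 2) / 2) * gcsd_g (x - s)) (Ioi s) := by
    apply Integrable.integrableOn
    exact ((gcsd_g_integrable.comp_sub_right s).const_mul _)
  have := setIntegral_mono_on hint1 hint2 measurableSet_Ioi hmono
  calc (∫ x in Ioi s, gcsd_g x) ≤ ∫ x in Ioi s, Real.exp (-(s ^ 2) / 2) * gcsd_g (x - s) := this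
    _ = Real.exp (-(s ^ 2) / 2) * ∫ x in Ioi s, gcsd_g (x - s) := integral_const_mul _ _
    _ = Real.exp (-(s ^ 2) / 2) * (1/2) := by rw [gcsd_shift, gcsd_g_integral_Ioi_zero]
    _ = Real.exp (-(s ^ 2) / 2) / 2 := by ring


/-- Tail bound on the Lebesgue measure of the small-density set of the
Gaussian copula density on `(0,1)^d`: for all sufficiently small `t > 0`,
`Leb({u : 0 < f_U(u) < t}) ≤ d · (t √(det Σ))^(1/(d λmax(Σ⁻¹ - I)))`. -/
theorem gaussian_copula_small_density_measure (d : ℕ) (hd : 0 < d)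
    (Sig : Matrix (Fin d) (Fin d) ℝ) (hSig : Sig.PosDef)
    (L : ℝ) (hL : 0 < L)
    (hLub : ∀ v : Fin d → ℝ, v ⬝ᵥ (Sig⁻¹ - 1).mulVec v ≤ L * ∑ k, (v k) ^ 2)
    (Φ Ψ : ℝ → ℝ)
    (hΦ : ∀ a : ℝ, Φ a = ∫ x in Set.Iic a, (Real.sqrt (2 * Real.pi))⁻¹ * Real.exp (-(x ^ 2) / 2))
    (hΨΦ : ∀ a : ℝ, Ψ (Φ a) = a)
    (hΦΨ : ∀ u ∈ Set.Ioo (0 : ℝ) 1, Φ (Ψ u) = u)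
    (fU : (Fin d → ℝ) → ℝ)
    (hfU : ∀ u : Fin d → ℝ,
      fU u = (Real.sqrt Sig.det)⁻¹ *
        Real.exp (-(1 / 2) * ((fun k => Ψ (u k)) ⬝ᵥ (Sig⁻¹ - 1).mulVec (fun k => Ψ (u k))))) :
    ∃ t₀ > (0 : ℝ), ∀ t : ℝ, 0 < t → t < t₀ →
      volume {u : Fin d → ℝ | (∀ k, u k ∈ Set.Ioo (0 : ℝ) 1) ∧ 0 < fU u ∧ fU u < t}
        ≤ ENNReal.ofReal (d * Real.rpow (t * Real.sqrt Sig.det) (1 / (d * L))) := by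
  have hdet : 0 < Sig.det := hSig.det_pos
  have hc : 0 < Real.sqrt Sig.det := Real.sqrt_pos.mpr hdet
  have hΦg : ∀ a, Φ a = ∫ x in Iic a, gcsd_g x := fun a => hΦ a
  have hΦmono : StrictMono Φ := by
    intro a b hab
    rw [hΦg a, hΦg b]
    exact gcsd_strictMono hab
  refine ⟨(Real.sqrt Sig.det)⁻¹, inv_pos.mpr hc, ?_⟩
  intro t ht ht0
  set c := Real.sqrt Sig.det with hc_def
  set ε := t * c with hε_def
  have hε : 0 < ε := mul_pos ht hc
  have hε1 : ε < 1 := by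
    have := mul_lt_mul_of_pos_right ht0 hc
    rwa [inv_mul_cancel₀ (ne_of_gt hc)] at this
  have hlogε : Real.log ε < 0 := Real.log_neg hε hε1
  have hd' : (0:ℝ) < (d:ℝ) := by exact_mod_cast hd
  have hdL : (0:ℝ) < (d:ℝ) * L := mul_pos hd' hL
  set s := Real.sqrt (-2 * Real.log ε / ((d:ℝ) * L)) with hs_def
  have harg : 0 < -2 * Real.log ε / ((d:ℝ) * L) := div_pos (by linarith) hdL
  have hs_sq : s ^ 2 = -2 * Real.log ε / ((d:ℝ) * L) := Real.sq_sqrt harg.le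
  have hs_pos : 0 < s := Real.sqrt_pos.mpr harg
  have hkey : Real.exp (-(s ^ 2) / 2) = Real.rpow ε (1 / ((d:ℝ) * L)) := by
    show Real.exp (-(s ^ 2) / 2) = ε ^ (1 / ((d:ℝ) * L))
    rw [Real.rpow_def_of_pos hε, hs_sq]
    congr 1
    field_simp
  -- facts about Φ at ±s
  have hΦneg : Φ (-s) = ∫ x in Ioi s, gcsd_g x := by rw [hΦg]; exact gcsd_symm s
  have hΦsum : Φ s + Φ (-s) = 1 := by
    rw [hΦneg, hΦg s]; exact gcsd_Iic_add_Ioi s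
  have htail : Φ (-s) ≤ Real.exp (-(s ^ 2) / 2) / 2 := by
    rw [hΦneg]; exact gcsd_tail s hs_pos.le
  have hΦneg_nonneg : 0 ≤ Φ (-s) := by
    rw [hΦneg]
    exact setIntegral_nonneg measurableSet_Ioi (fun x _ => (gcsd_g_pos x).le)
  set S : Set ℝ := Ioo 0 (Φ (-s)) ∪ Ioo (Φ s) 1 with hS_def
  -- the inclusion
  have hsub : {u : Fin d → ℝ | (∀ k, u k ∈ Set.Ioo (0 : ℝ) 1) ∧ 0 < fU u ∧ fU u < t}
      ⊆ ⋃ k, Set.pi Set.univ (fun j => if j = k then S else Ioo (0:ℝ) 1) := by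
    rintro u ⟨hmem, _, hlt⟩
    set z := fun k => Ψ (u k) with hz_def
    set Q := z ⬝ᵥ (Sig⁻¹ - 1).mulVec z with hQ_def
    have hexp : Real.exp (-(1/2) * Q) < ε := by
      have h1 : c⁻¹ * Real.exp (-(1/2) * Q) < t := by
        rw [hfU u] at hlt; exact hlt
      have h2 := mul_lt_mul_of_pos_left h1 hc
      rwa [← mul_assoc, mul_inv_cancel₀ (ne_of_gt hc), one_mul, mul_comm c t] at h2
    have hQgt : -2 * Real.log ε < Q := by
      have := (Real.lt_log_iff_exp_lt hε).mpr hexp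
      linarith
    have hQle : Q ≤ L * ∑ k, (z k) ^ 2 := hLub z
    have hsum : (d:ℝ) * s ^ 2 < ∑ k, (z k) ^ 2 := by
      have h3 : -2 * Real.log ε < L * ∑ k, (z k) ^ 2 := lt_of_lt_of_le hQgt hQle
      have heq : (d:ℝ) * (-2 * Real.log ε / ((d:ℝ) * L)) = -2 * Real.log ε / L := by
        field_simp
      rw [hs_sq, heq, div_lt_iff₀ hL]
      linarith [mul_comm L (∑ k, (z k) ^ 2)]
    obtain ⟨k, hk⟩ : ∃ k, s ^ 2 < (z k) ^ 2 := by
      by_contra h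
      push_neg at h
      have := Finset.sum_le_card_nsmul Finset.univ (fun k => (z k) ^ 2) (s ^ 2)
        (fun k _ => h k)
      rw [Finset.card_univ, Fintype.card_fin, nsmul_eq_mul] at this
      linarith
    have habs : s < |z k| := by
      refine lt_of_pow_lt_pow_left₀ 2 (abs_nonneg _) ?_
      rwa [sq_abs]
    have hΦzk : Φ (z k) = u k := hΦΨ (u k) (hmem k)
    refine Set.mem_iUnion.mpr ⟨k, ?_⟩
    intro j _
    show u j ∈ if j = k then S else Ioo (0:ℝ) 1
    by_cases hj : j = k
    · subst hj
      rw [if_pos rfl, hS_def]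
      rcases lt_abs.mp habs with h | h
      · right
        exact ⟨by rw [← hΦzk]; exact hΦmono h, (hmem j).2⟩
      · left
        refine ⟨(hmem j).1, ?_⟩
        rw [← hΦzk]
        exact hΦmono (by linarith)
    · rw [if_neg hj]
      exact hmem j
  -- the measure computation
  have hk_bound : ∀ k : Fin d,
      volume (Set.pi Set.univ (fun j => if j = k then S else Ioo (0:ℝ) 1))
        ≤ ENNReal.ofReal (Real.rpow ε (1 / ((d:ℝ) * L))) := by
    intro k
    rw [volume_pi_pi]
    have hprod : ∏ j, volume (if j = k then S else Ioo (0:ℝ) 1) = volume S := by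
      rw [Finset.prod_eq_single k]
      · rw [if_pos rfl]
      · intro j _ hj
        rw [if_neg hj]
        simp [Real.volume_Ioo]
      · intro h
        exact absurd (Finset.mem_univ k) h
    rw [hprod]
    have h1 : volume S ≤ ENNReal.ofReal (Φ (-s)) + ENNReal.ofReal (1 - Φ s) := by
      refine le_trans (measure_union_le _ _) ?_
      gcongr <;> simp [Real.volume_Ioo]
    have h2 : 1 - Φ s = Φ (-s) := by linarith
    rw [h2, ← ENNReal.ofReal_add hΦneg_nonneg hΦneg_nonneg] at h1
    refine le_trans h1 (ENNReal.ofReal_le_ofReal ?_)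
    rw [← hkey]
    linarith
  calc volume {u : Fin d → ℝ | (∀ k, u k ∈ Set.Ioo (0 : ℝ) 1) ∧ 0 < fU u ∧ fU u < t}
      ≤ volume (⋃ k, Set.pi Set.univ (fun j => if j = k then S else Ioo (0:ℝ) 1)) :=
        measure_mono hsub
    _ ≤ ∑ k : Fin d, volume (Set.pi Set.univ (fun j => if j = k then S else Ioo (0:ℝ) 1)) :=
        measure_iUnion_fintype_le _ _
    _ ≤ ∑ _k : Fin d, ENNReal.ofReal (Real.rpow ε (1 / ((d:ℝ) * L))) :=
        Finset.sum_le_sum (fun k _ => hk_bound k)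
    _ = ENNReal.ofReal ((d:ℝ) * Real.rpow ε (1 / ((d:ℝ) * L))) := by
        rw [Finset.sum_const, Finset.card_univ, Fintype.card_fin, nsmul_eq_mul,
          ENNReal.ofReal_mul (Nat.cast_nonneg d), ENNReal.ofReal_natCast]
end

section
/- (AIPW representation of the bias-corrected matching estimator) Let {(D_i, Y_i)}_{i=1}^n with D_i ∈ {0,1}, let 𝒥(i) ⊆ {j : D_j = 1−D_i} with |𝒥(i)| = M for each i, let μ̂_0, μ̂_1 : ℝ^m → ℝ and points Û_{ω,i} ∈ ℝ^m. Define Ŷ_i(ω) = Y_i if D_i = ω and Ŷ_i(ω) = (1/M)∑_{j∈𝒥(i)}(Y_j + μ̂_ω(Û_{ω,i}) − μ̂_ω(Û_{ω,j})) if D_i = 1−ω; define τ̂ = (1/n)∑_i(Ŷ_i(1) − Ŷ_i(0)), K(i) = ∑_{j: D_j = 1−D_i} 1(i ∈ 𝒥(j)), R̂_i = Y_i − μ̂_{D_i}(Û_{D_i,i}), and τ̂^reg = (1/n)∑_i(μ̂_1(Û_{1,i}) − μ̂_0(Û_{0,i})). Then τ̂ = τ̂^reg + (1/n)∑_{i=1}^n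 (2D_i − 1)(1 + K(i)/M) R̂_i. -/
/-- AIPW representation of the bias-corrected matching estimator:
`τ̂ = τ̂^reg + (1/n) ∑ᵢ (2Dᵢ - 1)(1 + K(i)/M) R̂ᵢ`. -/
theorem aipw_representation (n M m : ℕ) (hn : 0 < n) (hM : 0 < M)
    (D : Fin n → ℕ) (hD : ∀ i, D i ≤ 1)
    (Y : Fin n → ℝ)
    (J : Fin n → Finset (Fin n))
    (hJcard : ∀ i, (J i).card = M)
    (hJopp : ∀ i j, j ∈ J i → D j = 1 - D i)
    (μ : ℕ → (Fin m → ℝ) → ℝ) (U : ℕ → Fin n → (Fin m → ℝ)) :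
    (1 / n : ℝ) * ∑ i,
        ((if D i = 1 then Y i
          else (1 / M : ℝ) * ∑ j ∈ J i, (Y j + μ 1 (U 1 i) - μ 1 (U 1 j)))
        - (if D i = 0 then Y i
          else (1 / M : ℝ) * ∑ j ∈ J i, (Y j + μ 0 (U 0 i) - μ 0 (U 0 j))))
      = (1 / n : ℝ) * ∑ i, (μ 1 (U 1 i) - μ 0 (U 0 i))
        + (1 / n : ℝ) * ∑ i,
            (2 * (D i : ℝ) - 1)
              * (1 + ((Finset.univ.filter fun j => D j = 1 - D i ∧ i ∈ J j).card : ℝ) / M)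
              * (Y i - μ (D i) (U (D i) i)) := by
  classical
  have hM' : (M : ℝ) ≠ 0 := Nat.cast_ne_zero.mpr hM.ne'
  -- the unrestricted matching count
  set K : Fin n → ℕ := fun i => (Finset.univ.filter fun j => i ∈ J j).card with hKdef
  -- the filter in the statement equals the unrestricted one
  have hfilt : ∀ i : Fin n,
      (Finset.univ.filter fun j => D j = 1 - D i ∧ i ∈ J j)
        = Finset.univ.filter (fun j => i ∈ J j) := by
    intro i
    ext j
    simp only [Finset.mem_filter, Finset.mem_univ, true_and, and_iff_right_iff_imp]
    intro h
    have h2 := hJopp j i h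
    have := hD i; have := hD j
    omega
  -- key double-sum swap
  have key : ∀ (d : ℕ), d ≤ 1 → ∀ (g : Fin n → ℝ),
      ∑ i ∈ Finset.univ.filter (fun i => D i = d), ∑ j ∈ J i, g j
        = ∑ j ∈ Finset.univ.filter (fun j => D j = 1 - d), (K j : ℝ) * g j := by
    intro d hd g
    have h1 : ∀ i : Fin n, ∑ j ∈ J i, g j = ∑ j : Fin n, if j ∈ J i then g j else 0 := by
      intro i
      rw [Finset.sum_ite_mem, Finset.univ_inter]
    calc ∑ i ∈ Finset.univ.filter (fun i => D i = d), ∑ j ∈ J i, g j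
        = ∑ i ∈ Finset.univ.filter (fun i => D i = d), ∑ j : Fin n,
            if j ∈ J i then g j else 0 := Finset.sum_congr rfl fun i _ => h1 i
      _ = ∑ j : Fin n, ∑ i ∈ Finset.univ.filter (fun i => D i = d),
            if j ∈ J i then g j else 0 := Finset.sum_comm
      _ = ∑ j : Fin n, if D j = 1 - d then (K j : ℝ) * g j else 0 := by
          apply Finset.sum_congr rfl
          intro j _
          rw [← Finset.sum_filter, Finset.filter_filter, Finset.sum_const, nsmul_eq_mul]
          by_cases hj : D j = 1 - d
          · rw [if_pos hj]
            have hset : Finset.filter (fun i => D i = d ∧ j ∈ J i) Finset.univ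
                = Finset.filter (fun i => j ∈ J i) Finset.univ := by
              ext i
              simp only [Finset.mem_filter, Finset.mem_univ, true_and]
              constructor
              · rintro ⟨_, h⟩; exact h
              · intro h
                refine ⟨?_, h⟩
                have h2 := hJopp i j h
                have := hD i; have := hD j
                omega
            rw [hset]
          · rw [if_neg hj]
            have he : Finset.filter (fun i => D i = d ∧ j ∈ J i) Finset.univ = ∅ := by
              ext i
              simp only [Finset.mem_filter, Finset.mem_univ, true_and,
                Finset.notMem_empty, iff_false, not_and]
              intro hid hmem
              exact hj (by rw [hJopp i j hmem, hid])
            rw [he]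
            simp
      _ = ∑ j ∈ Finset.univ.filter (fun j => D j = 1 - d), (K j : ℝ) * g j :=
          (Finset.sum_filter _ _).symm
  -- expansion of the matched sum
  have hexp : ∀ (c : ℝ) (g : Fin n → ℝ) (i : Fin n),
      ∑ j ∈ J i, (Y j + c - g j) = (∑ j ∈ J i, (Y j - g j)) + (M : ℝ) * c := by
    intro c g i
    have h : ∀ j, Y j + c - g j = (Y j - g j) + c := fun j => by ring
    simp_rw [h]
    rw [Finset.sum_add_distrib, Finset.sum_const, hJcard i, nsmul_eq_mul]
  rw [← mul_add]
  congr 1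
  rw [← Finset.sum_add_distrib, ← sub_eq_zero, ← Finset.sum_sub_distrib]
  have hsplit : ∀ i ∈ (Finset.univ : Finset (Fin n)),
      ((if D i = 1 then Y i
          else (1 / M : ℝ) * ∑ j ∈ J i, (Y j + μ 1 (U 1 i) - μ 1 (U 1 j)))
        - (if D i = 0 then Y i
          else (1 / M : ℝ) * ∑ j ∈ J i, (Y j + μ 0 (U 0 i) - μ 0 (U 0 j))))
        - ((μ 1 (U 1 i) - μ 0 (U 0 i))
          + (2 * (D i : ℝ) - 1)
              * (1 + ((Finset.univ.filter fun j => D j = 1 - D i ∧ i ∈ J j).card : ℝ) / M)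
              * (Y i - μ (D i) (U (D i) i)))
      = (if D i = 0 then
            (1 / M : ℝ) * (∑ j ∈ J i, (Y j - μ 1 (U 1 j)))
              + (1 / M : ℝ) * ((K i : ℝ) * (Y i - μ 0 (U 0 i)))
          else 0)
        - (if D i = 1 then
            (1 / M : ℝ) * (∑ j ∈ J i, (Y j - μ 0 (U 0 j)))
              + (1 / M : ℝ) * ((K i : ℝ) * (Y i - μ 1 (U 1 i)))
          else 0) := by
    intro i _
    rw [hfilt i]
    have hKi : (Finset.filter (fun j => i ∈ J j) Finset.univ).card = K i := rfl
    rw [hKi]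
    have hDi : D i = 0 ∨ D i = 1 := by have := hD i; omega
    rcases hDi with h0 | h1
    · rw [h0]
      simp only [if_pos rfl, zero_ne_one, if_false, one_ne_zero]
      rw [hexp (μ 1 (U 1 i)) (fun j => μ 1 (U 1 j)) i]
      push_cast
      field_simp
      ring
    · rw [h1]
      simp only [if_pos rfl, zero_ne_one, if_false, one_ne_zero]
      rw [hexp (μ 0 (U 0 i)) (fun j => μ 0 (U 0 j)) i]
      push_cast
      field_simp
      ring
  rw [Finset.sum_congr rfl hsplit, Finset.sum_sub_distrib,
    ← Finset.sum_filter, ← Finset.sum_filter,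
    Finset.sum_add_distrib, Finset.sum_add_distrib,
    ← Finset.mul_sum, ← Finset.mul_sum, ← Finset.mul_sum, ← Finset.mul_sum,
    key 0 (by norm_num) (fun j => Y j - μ 1 (U 1 j)),
    key 1 (by norm_num) (fun j => Y j - μ 0 (U 0 j))]
  norm_num
  ring
end
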